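/- Suppose two agents start a rendezvous procedure with distinct positive integer labels at rounds r_i and r_j respectively, and the procedure guarantees meeting within T_REN(min(label_i, label_j)) rounds of the later start, provided both run uninterrupted. If within any window of τ = (6KF+1)·T_REN(L) rounds (where L upper-bounds both labels) each agent restarts at most 3KF times, then the two agents meet within τ rounds of the later start. -/
import Mathlib


/-- Two agents start a rendezvous procedure with distinct positive labels
`label_i ≠ label_j` (both bounded by `L`) at rounds `r_i` and `r_j`.  The procedure
guarantees a meeting within `T_REN (min label_i label_j)` rounds of any starting point
(after both have started), provided neither agent restarts during that stretch.  If in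
the window of `τ = (6KF+1)·T_REN L` rounds following the later start each agent
restarts at most `3KF` times, then the agents meet within `τ` rounds of the later
start. -/
theorem rendezvous_despite_restarts
    (K F L : ℕ) (T_REN : ℕ → ℕ) (hmono : Monotone T_REN)
    (label_i label_j r_i r_j : ℕ)
    (hpos_i : 0 < label_i) (hpos_j : 0 < label_j) (hne : label_i ≠ label_j)
    (hLi : label_i ≤ L) (hLj : label_j ≤ L)
    (Restart_i Restart_j : ℕ → Prop)
    [DecidablePred Restart_i] [DecidablePred Restart_j]
    (meets : ℕ → Prop)
    (τ : ℕ) (hτ : τ = (6 * K * F + 1) * T_REN L)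
    (hguar : ∀ s, max r_i r_j ≤ s →
      (∀ t, s ≤ t → t < s + T_REN (min label_i label_j) →
        ¬ Restart_i t ∧ ¬ Restart_j t) →
      ∃ t, s ≤ t ∧ t < s + T_REN (min label_i label_j) ∧ meets t)
    (hres_i : ((Finset.Ico (max r_i r_j) (max r_i r_j + τ)).filter
        Restart_i).card ≤ 3 * K * F)
    (hres_j : ((Finset.Ico (max r_i r_j) (max r_i r_j + τ)).filter
        Restart_j).card ≤ 3 * K * F) :
    ∃ t, max r_i r_j ≤ t ∧ t ≤ max r_i r_j + τ ∧ meets t := by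

  set M := max r_i r_j with hM
  set T := T_REN L with hT
  set Tm := T_REN (min label_i label_j) with hTm
  have hTmT : Tm ≤ T := hmono (le_trans (min_le_left _ _) hLi)
  set m := 6 * K * F with hm
  have hτ' : τ = (m + 1) * T := hτ
  by_cases hfree : ∃ k < m + 1, ∀ t, M + k * T ≤ t → t < M + k * T + Tm →
      ¬ Restart_i t ∧ ¬ Restart_j t
  · obtain ⟨k, hk, hf⟩ := hfree
    obtain ⟨t, ht1, ht2, ht3⟩ := hguar (M + k * T) (Nat.le_add_right _ _) hf
    refine ⟨t, le_trans (Nat.le_add_right _ _) ht1, ?_, ht3⟩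
    have h1 : (k + 1) * T ≤ (m + 1) * T := Nat.mul_le_mul_right T hk
    have h2 : (k + 1) * T = k * T + T := by ring
    omega
  · exfalso
    have hall : ∀ k : ℕ, ∃ t, k < m + 1 → (M + k * T ≤ t ∧ t < M + k * T + Tm ∧
        (Restart_i t ∨ Restart_j t)) := by
      intro k
      by_cases hk : k < m + 1
      · by_contra hcon
        push_neg at hcon
        exact hfree ⟨k, hk, fun t h1 h2 => (hcon t).2 h1 h2⟩
      · exact ⟨0, fun h => absurd h hk⟩
    choose f hf using hall
    have hlt : ∀ a b : ℕ, a < b → b < m + 1 → f a < f b := by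
      intro a b hab hb
      obtain ⟨ha1, ha2, _⟩ := hf a (lt_trans hab hb)
      obtain ⟨hb1, _, _⟩ := hf b hb
      have h1 : (a + 1) * T ≤ b * T := Nat.mul_le_mul_right T hab
      have h2 : (a + 1) * T = a * T + T := by ring
      omega
    have hinj : Set.InjOn f (Finset.range (m + 1)) := by
      intro a ha b hb hab
      simp only [Finset.coe_range, Set.mem_Iio] at ha hb
      rcases lt_trichotomy a b with h | h | h
      · exact absurd hab (Nat.ne_of_lt (hlt a b h hb))
      · exact h
      · exact absurd hab.symm (Nat.ne_of_lt (hlt b a h ha))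
    have hmap : ∀ k ∈ Finset.range (m + 1),
        f k ∈ (Finset.Ico M (M + τ)).filter (fun t => Restart_i t ∨ Restart_j t) := by
      intro k hk
      rw [Finset.mem_range] at hk
      obtain ⟨h1, h2, h3⟩ := hf k hk
      have hk1 : (k + 1) * T ≤ (m + 1) * T := Nat.mul_le_mul_right T hk
      have hk2 : (k + 1) * T = k * T + T := by ring
      simp only [Finset.mem_filter, Finset.mem_Ico]
      exact ⟨⟨by omega, by omega⟩, h3⟩
    have hcard := Finset.card_le_card_of_injOn f hmap hinj
    rw [Finset.card_range] at hcard
    have hsplit : ((Finset.Ico M (M + τ)).filter (fun t => Restart_i t ∨ Restart_j t)).card ≤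
        ((Finset.Ico M (M + τ)).filter Restart_i).card +
        ((Finset.Ico M (M + τ)).filter Restart_j).card := by
      rw [Finset.filter_or]
      exact Finset.card_union_le _ _
    have h6 : 6 * K * F = 3 * K * F + 3 * K * F := by ring
    omega
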